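/- Suppose H is finite dimensional and α = 3, and set S = argmin Φ. Then: (i) the trajectory x is bounded and dist(x(t), S) → 0 as t → +∞; (ii) moreover, if there exists t₁ ≥ t₀ such that x(t) ∈ S for all t ≥ t₁, then x(t) converges (in norm), as t → +∞, to a point of S. -/

import Mathlib

/-!
Fix a minimizer `z`. Along `(AVD)_3` the energy
`E(t) = t² (Φ(x t) - Φ z) + ½ ‖2 (x t - z) + t ẋ(t)‖²`
has derivative `2t (Φ(x t) - Φ z - ⟪∇Φ(x t), x t - z⟫) ≤ 0` by convexity,
so it is bounded by `E(t₀)`.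
This gives `Φ(x t) - min Φ = O(1/t²)` and a bound on `2 (x - z) + t ẋ = (t² (x - z))' / t`,
which in turn bounds `x`. In finite dimension a bounded trajectory along which `Φ` tends to its
minimum approaches `S` by compactness. If `x` eventually stays in `S`, then `∇Φ(x) = 0` there and
the equation becomes `ẍ + (3/t) ẋ = 0`, for which `t³ ẋ` and `x + (t/2) ẋ` are constant; hence
`x(t) = a - b/(2t²)` converges, and its limit lies in the closed set `S`.
-/

open Set Filter Topology Metric
open scoped RealInnerProductSpace

theorem ConvexOn.add_fderiv_sub_le {E : Type*} [NormedAddCommGroup E] [NormedSpace ℝ E]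
    {s : Set E} {f : E → ℝ} {f' : E →L[ℝ] ℝ} {p q : E} (hf : ConvexOn ℝ s f)
    (hp : p ∈ s) (hq : q ∈ s) (hf' : HasFDerivAt f f' p) :
    f p + f' (q - p) ≤ f q := by
  let g : ℝ →ᵃ[ℝ] E := AffineMap.lineMap p q
  have hg : HasDerivAt (f ∘ g) (f' (q - p)) 0 := by
    refine HasFDerivAt.comp_hasDerivAt (0 : ℝ) ?_ AffineMap.hasDerivAt_lineMap
    simpa [g] using hf'
  have h := (hf.comp_affineMap g).le_slope_of_hasDerivAt (x := 0) (y := 1)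
    (by simpa [g] using hp) (by simpa [g] using hq) one_pos hg
  simp only [slope_def_field, Function.comp_apply, AffineMap.lineMap_apply_one,
    AffineMap.lineMap_apply_zero, sub_zero, div_one, g] at h
  linarith

theorem isClosed_setOf_forall_le {X : Type*} [TopologicalSpace X] {f : X → ℝ}
    (hf : Continuous f) : IsClosed {p | ∀ y, f p ≤ f y} := by
  simpa only [ofPred_forall] using isClosed_iInter fun y => isClosed_le hf continuous_const

theorem gradient_eq_zero_of_forall_le {F : Type*} [NormedAddCommGroup F] [InnerProductSpace ℝ F]
    [CompleteSpace F] {f : F → ℝ} {p : F} (hp : ∀ y, f p ≤ f y) : gradient f p = 0 := by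
  simp [gradient, IsLocalMin.fderiv_eq_zero (Eventually.of_forall hp)]

theorem eq_of_hasDerivAt_eq_zero_on_Ici {E : Type*} [NormedAddCommGroup E] [NormedSpace ℝ E]
    {f : ℝ → E} {a : ℝ} (hf : ∀ t ≥ a, HasDerivAt f 0 t) {t : ℝ} (ht : a ≤ t) : f t = f a := by
  have := norm_image_sub_le_of_norm_deriv_le_segment' (C := 0)
    (fun s hs => (hf s hs.1).hasDerivWithinAt) (fun _ _ => by simp) t ⟨ht, le_rfl⟩
  simpa [sub_eq_zero] using this

theorem norm_le_of_norm_two_smul_add_smul_deriv_le {E : Type*} [NormedAddCommGroup E]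
    [NormedSpace ℝ E] {w w' : ℝ → E} {t₀ C : ℝ} (ht₀ : 0 < t₀)
    (hw : ∀ t ≥ t₀, HasDerivAt w (w' t) t) (hC : ∀ t ≥ t₀, ‖(2 : ℝ) • w t + t • w' t‖ ≤ C)
    {T : ℝ} (hT : t₀ ≤ T) : ‖w T‖ ≤ ‖w t₀‖ + C := by
  have hu : ∀ t ≥ t₀, HasDerivAt (fun s => s ^ 2 • w s) (t • ((2 : ℝ) • w t + t • w' t)) t := by
    intro t ht
    refine ((hasDerivAt_pow 2 t).smul (hw t ht)).congr_deriv ?_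
    simp only [Nat.cast_ofNat]
    module
  have hmv := norm_image_sub_le_of_norm_deriv_le_segment' (C := T * C)
    (fun s hs => (hu s hs.1).hasDerivWithinAt) (fun s hs => by
      rw [norm_smul, Real.norm_of_nonneg (ht₀.le.trans hs.1)]
      exact mul_le_mul hs.2.le (hC s hs.1) (norm_nonneg _) (ht₀.le.trans hT)) T ⟨hT, le_rfl⟩
  have hC0 : 0 ≤ C := (norm_nonneg _).trans (hC t₀ le_rfl)
  have hT2 : t₀ ^ 2 ≤ T ^ 2 := pow_le_pow_left₀ ht₀.le hT 2
  have key : T ^ 2 * ‖w T‖ ≤ T ^ 2 * (‖w t₀‖ + C) := by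
    have := (norm_sub_norm_le _ _).trans hmv
    simp only [norm_smul, Real.norm_of_nonneg (sq_nonneg _)] at this
    nlinarith [mul_le_mul_of_nonneg_right hT2 (norm_nonneg (w t₀)), mul_nonneg hC0 ht₀.le]
  exact le_of_mul_le_mul_left key (by nlinarith)

theorem tendsto_infDist_of_tendsto_comp {X ι : Type*} [MetricSpace X] {l : Filter ι}
    {f : X → ℝ} {m : ℝ} {K T : Set X} {y : ι → X} (hf : Continuous f) (hK : IsCompact K)
    (hT : {p | f p = m} ⊆ T) (hyK : ∀ᶠ i in l, y i ∈ K)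
    (hfy : Tendsto (fun i => f (y i)) l (𝓝 m)) :
    Tendsto (fun i => infDist (y i) T) l (𝓝 0) := by
  rw [Metric.tendsto_nhds]
  intro ε hε
  let C := K ∩ {p | ε ≤ infDist p T}
  have hC : IsCompact C := hK.inter_right (isClosed_le continuous_const (continuous_infDist_pt T))
  have hfC : ∀ p ∈ C, 0 < |f p - m| := fun p hp => abs_pos.2 <| sub_ne_zero.2 fun h => by
    have : ε ≤ infDist p T := hp.2
    rw [infDist_zero_of_mem (hT h)] at this
    linarith
  obtain ⟨δ, hδ, hδC⟩ := hC.exists_forall_le' (hf.sub continuous_const).abs.continuousOn hfC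
  filter_upwards [hyK, Metric.tendsto_nhds.1 hfy δ hδ] with i hiK hiδ
  rw [dist_zero_right, Real.norm_of_nonneg infDist_nonneg]
  by_contra! hiε
  have : δ ≤ |f (y i) - m| := hδC (y i) ⟨hiK, hiε⟩
  rw [Real.dist_eq] at hiδ
  linarith

theorem tendsto_of_free_avd {E : Type*} [NormedAddCommGroup E] [NormedSpace ℝ E]
    {x x' : ℝ → E} {t₁ : ℝ} (ht₁ : 0 < t₁)
    (hx : ∀ t ≥ t₁, HasDerivAt x (x' t) t)
    (hx' : ∀ t ≥ t₁, HasDerivAt x' (-(3 / t) • x' t) t) :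
    Tendsto x atTop (𝓝 (x t₁ + (t₁ / 2) • x' t₁)) := by
  have hmom : ∀ t ≥ t₁, t ^ 3 • x' t = t₁ ^ 3 • x' t₁ := fun t ht =>
    eq_of_hasDerivAt_eq_zero_on_Ici (fun s hs =>
      ((hasDerivAt_pow 3 s).smul (hx' s hs)).congr_deriv (by
        have : s ^ 3 * (3 / s) = 3 * s ^ 2 := by field_simp [(ht₁.trans_le hs).ne']
        simp only [smul_smul, mul_neg, this]
        module)) ht
  have hconst : ∀ t ≥ t₁, x t + (t / 2) • x' t = x t₁ + (t₁ / 2) • x' t₁ := fun t ht =>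
    eq_of_hasDerivAt_eq_zero_on_Ici (fun s hs =>
      ((hx s hs).add (((hasDerivAt_id s).div_const 2).smul (hx' s hs))).congr_deriv (by
        have : s / 2 * (3 / s) = 3 / 2 := by field_simp [(ht₁.trans_le hs).ne']
        simp only [id, smul_smul, mul_neg, this]
        module)) ht
  have hx_eq : ∀ t ≥ t₁, x t = x t₁ + (t₁ / 2) • x' t₁ - (2 * t ^ 2)⁻¹ • (t₁ ^ 3 • x' t₁) := by
    intro t ht
    have : (2 * t ^ 2)⁻¹ * t ^ 3 = t / 2 := by field_simp [(ht₁.trans_le ht).ne']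
    rw [← hconst t ht, ← hmom t ht, smul_smul, this, add_sub_cancel_right]
  have h0 : Tendsto (fun t : ℝ => (2 * t ^ 2)⁻¹) atTop (𝓝 0) :=
    tendsto_inv_atTop_zero.comp ((tendsto_pow_atTop two_ne_zero).const_mul_atTop two_pos)
  refine Tendsto.congr' (eventually_atTop.2 ⟨t₁, fun t ht => (hx_eq t ht).symm⟩) ?_
  simpa using tendsto_const_nhds.sub (h0.smul_const (t₁ ^ 3 • x' t₁))

section DampedFlow

variable {H : Type*} [NormedAddCommGroup H] [InnerProductSpace ℝ H]

noncomputable def avdEnergy (Φ : H → ℝ) (x x' : ℝ → H) (z : H) (t : ℝ) : ℝ :=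
  t ^ 2 * (Φ (x t) - Φ z) + 1 / 2 * ‖(2 : ℝ) • (x t - z) + t • x' t‖ ^ 2

variable {Φ : H → ℝ} {x x' : ℝ → H} {z : H}

theorem hasDerivAt_avdEnergy [CompleteSpace H] {a : H} {t : ℝ}
    (hΦ : DifferentiableAt ℝ Φ (x t)) (hx : HasDerivAt x (x' t) t) (hx' : HasDerivAt x' a t)
    (ht : t ≠ 0) (hode : a + (3 / t) • x' t + gradient Φ (x t) = 0) :
    HasDerivAt (avdEnergy Φ x x' z)
      (2 * t * (Φ (x t) - Φ z - ⟪gradient Φ (x t), x t - z⟫)) t := by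
  have hΦx : HasDerivAt (fun s => Φ (x s)) ⟪gradient Φ (x t), x' t⟫ t := by
    have hΦ' := hΦ.hasGradientAt
    rw [hasGradientAt_iff_hasFDerivAt] at hΦ'
    simpa [Function.comp_def] using hΦ'.comp_hasDerivAt t hx
  have ha : a = -((3 / t) • x' t + gradient Φ (x t)) :=
    eq_neg_of_add_eq_zero_left (by rwa [← add_assoc])
  have hv : HasDerivAt (fun s => (2 : ℝ) • (x s - z) + s • x' s) (-(t • gradient Φ (x t))) t := by
    refine (((hx.sub_const z).const_smul (2 : ℝ)).add ((hasDerivAt_id t).smul hx')).congr_deriv ?_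
    have h3 : t * (3 / t) = 3 := by field_simp
    simp only [ha, id, smul_neg, smul_add, smul_smul, h3]
    module
  refine (((hasDerivAt_pow 2 t).mul (hΦx.sub_const (Φ z))).add
    (hv.norm_sq.const_mul (1 / 2))).congr_deriv ?_
  simp only [inner_neg_right, inner_add_left, real_inner_smul_left, real_inner_smul_right,
    real_inner_comm (x' t), real_inner_comm (x t - z)]
  ring

theorem antitoneOn_avdEnergy [CompleteSpace H] {x'' : ℝ → H} {t₀ : ℝ}
    (hΦconv : ConvexOn ℝ univ Φ) (hΦ : Differentiable ℝ Φ) (ht₀ : 0 < t₀)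
    (hx : ∀ t ≥ t₀, HasDerivAt x (x' t) t) (hx' : ∀ t ≥ t₀, HasDerivAt x' (x'' t) t)
    (hode : ∀ t ≥ t₀, x'' t + (3 / t) • x' t + gradient Φ (x t) = 0) :
    AntitoneOn (avdEnergy Φ x x' z) (Ici t₀) := by
  have hE : ∀ t ≥ t₀, HasDerivAt (avdEnergy Φ x x' z)
      (2 * t * (Φ (x t) - Φ z - ⟪gradient Φ (x t), x t - z⟫)) t := fun t ht =>
    hasDerivAt_avdEnergy (hΦ _) (hx t ht) (hx' t ht) (ht₀.trans_le ht).ne' (hode t ht)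
  refine antitoneOn_of_hasDerivWithinAt_nonpos (convex_Ici t₀)
    (fun t ht => (hE t ht).continuousAt.continuousWithinAt)
    (fun t ht => (hE t (interior_subset ht)).hasDerivWithinAt) fun t ht => ?_
  have ht' : t₀ ≤ t := interior_subset ht
  have hconv := hΦconv.add_fderiv_sub_le (mem_univ (x t)) (mem_univ z) (hΦ (x t)).hasFDerivAt
  rw [← inner_gradient_left, ← neg_sub, inner_neg_right] at hconv
  exact mul_nonpos_of_nonneg_of_nonpos (by linarith) (by linarith)

theorem sq_mul_sub_le_avdEnergy (t : ℝ) :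
    t ^ 2 * (Φ (x t) - Φ z) ≤ avdEnergy Φ x x' z t := by
  unfold avdEnergy
  nlinarith [sq_nonneg ‖(2 : ℝ) • (x t - z) + t • x' t‖]

theorem tendsto_of_avdEnergy_le {t₀ E₀ : ℝ} (ht₀ : 0 < t₀) (hz : ∀ y, Φ z ≤ Φ y)
    (hE : ∀ t ≥ t₀, avdEnergy Φ x x' z t ≤ E₀) :
    Tendsto (fun t => Φ (x t)) atTop (𝓝 (Φ z)) := by
  have hgap : ∀ t ≥ t₀, Φ (x t) - Φ z ≤ E₀ / t ^ 2 := fun t ht => by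
    rw [le_div_iff₀ (pow_pos (ht₀.trans_le ht) 2), mul_comm]
    exact (sq_mul_sub_le_avdEnergy t).trans (hE t ht)
  have h := squeeze_zero' (Eventually.of_forall fun t => sub_nonneg.2 (hz (x t)))
    (eventually_atTop.2 ⟨t₀, hgap⟩)
    (tendsto_const_nhds.div_atTop (tendsto_pow_atTop two_ne_zero))
  simpa using h.add_const (Φ z)

theorem norm_le_sqrt_avdEnergy (hz : ∀ y, Φ z ≤ Φ y) (t : ℝ) :
    ‖(2 : ℝ) • (x t - z) + t • x' t‖ ≤ √(2 * avdEnergy Φ x x' z t) := by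
  apply Real.le_sqrt_of_sq_le
  unfold avdEnergy
  nlinarith [mul_nonneg (sq_nonneg t) (sub_nonneg.2 (hz (x t)))]

theorem norm_sub_le_of_avdEnergy_le {t₀ E₀ : ℝ} (ht₀ : 0 < t₀) (hz : ∀ y, Φ z ≤ Φ y)
    (hx : ∀ t ≥ t₀, HasDerivAt x (x' t) t) (hE : ∀ t ≥ t₀, avdEnergy Φ x x' z t ≤ E₀) :
    ∀ t ≥ t₀, ‖x t - z‖ ≤ ‖x t₀ - z‖ + √(2 * E₀) := fun _ ht =>
  norm_le_of_norm_two_smul_add_smul_deriv_le ht₀ (fun t ht => (hx t ht).sub_const z)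
    (fun t ht => (norm_le_sqrt_avdEnergy hz t).trans (by gcongr; exact hE t ht)) ht

end DampedFlow

/-- in finite dimension and for `α = 3`, the trajectory of
`(AVD)_3` is bounded and `dist(x(t), S) → 0`; moreover, if the trajectory
eventually lies in `S = argmin Φ`, then it converges to a point of `S`. -/
theorem stmt_9
    {H : Type*} [NormedAddCommGroup H] [InnerProductSpace ℝ H]
    [FiniteDimensional ℝ H] [CompleteSpace H]
    (Φ : H → ℝ) (hΦconv : ConvexOn ℝ Set.univ Φ) (hΦC1 : ContDiff ℝ 1 Φ)
    (S : Set H) (hS : S = {z : H | ∀ y : H, Φ z ≤ Φ y}) (hSne : S.Nonempty)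
    (t₀ : ℝ) (ht₀ : 0 < t₀)
    (x : ℝ → H) (hx : ContDiff ℝ 2 x)
    (hode : ∀ t : ℝ, t₀ ≤ t →
      deriv (deriv x) t + ((3 : ℝ) / t) • deriv x t + gradient Φ (x t) = 0) :
    (∃ B : ℝ, ∀ t : ℝ, t₀ ≤ t → ‖x t‖ ≤ B) ∧
    Filter.Tendsto (fun t : ℝ => Metric.infDist (x t) S) Filter.atTop (nhds 0) ∧
    ((∃ t₁ : ℝ, t₀ ≤ t₁ ∧ ∀ t : ℝ, t₁ ≤ t → x t ∈ S) →
      ∃ xs ∈ S, Filter.Tendsto x Filter.atTop (nhds xs)) := by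
  subst hS
  obtain ⟨z, hz⟩ := hSne
  have hx₁ : ∀ t, HasDerivAt x (deriv x t) t := fun t =>
    (hx.differentiable (by norm_num) t).hasDerivAt
  have hx₂ : ∀ t, HasDerivAt (deriv x) (deriv (deriv x) t) t := fun t =>
    (hx.differentiable_deriv_two t).hasDerivAt
  set E₀ := avdEnergy Φ x (deriv x) z t₀
  have hE : ∀ t ≥ t₀, avdEnergy Φ x (deriv x) z t ≤ E₀ := fun t ht =>
    antitoneOn_avdEnergy hΦconv (hΦC1.differentiable one_ne_zero) ht₀ (fun t _ => hx₁ t)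
      (fun t _ => hx₂ t) hode self_mem_Ici ht ht
  have hbdd := norm_sub_le_of_avdEnergy_le ht₀ hz (fun t _ => hx₁ t) hE
  refine ⟨⟨‖x t₀ - z‖ + √(2 * E₀) + ‖z‖, fun t ht =>
    (norm_le_norm_sub_add (x t) z).trans (by gcongr; exact hbdd t ht)⟩, ?_, ?_⟩
  · exact tendsto_infDist_of_tendsto_comp hΦC1.continuous (isCompact_closedBall z _)
      (fun p hp y => hp ▸ hz y)
      (eventually_atTop.2 ⟨t₀, fun t ht => mem_closedBall_iff_norm.2 (hbdd t ht)⟩)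
      (tendsto_of_avdEnergy_le ht₀ hz hE)
  · rintro ⟨t₁, ht₁, hS₁⟩
    have hfree : ∀ t ≥ t₁, HasDerivAt (deriv x) (-(3 / t) • deriv x t) t := fun t ht => by
      have h := hode t (ht₁.trans ht)
      rw [gradient_eq_zero_of_forall_le (hS₁ t ht), add_zero] at h
      rw [neg_smul, ← eq_neg_of_add_eq_zero_left h]
      exact hx₂ t
    have hlim := tendsto_of_free_avd (ht₀.trans_le ht₁) (fun t _ => hx₁ t) hfree
    exact ⟨_, (isClosed_setOf_forall_le hΦC1.continuous).mem_of_tendsto hlim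
      (eventually_atTop.2 ⟨t₁, hS₁⟩), hlim⟩
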